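/- arXiv:2203.10984 — 3 statements merged into one kernel-verified Lean document; each statement's English description precedes it below -/
import Mathlib

section
/- Let n, k ≥ 1 be integers and p ≥ n a prime. Let Φ be the (2k × n) Vandermonde matrix over 𝔽_p with entries Φ_{i,j} = j^{i-1} mod p. Then for any two k-sparse vectors x, y ∈ 𝔽_p^n (each with at most k nonzero coordinates), if Φ·x = Φ·y then x = y. -/
/-!
The difference `x - y` is `2k`-sparse and lies in the kernel of `Φ`. Restricted to its support,
it solves a square Vandermonde system whose nodes `1, …, n` are distinct in `𝔽_p` because
`n ≤ p`, and such a system has only the trivial solution.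
-/

open Finset Function

theorem ZMod.natCast_fin_injective {n p : ℕ} (hnp : n ≤ p) :
    Injective fun j : Fin n => ((j : ℕ) : ZMod p) := fun i j hij => Fin.ext <| by
  rwa [ZMod.natCast_eq_natCast_iff', Nat.mod_eq_of_lt (i.2.trans_le hnp),
    Nat.mod_eq_of_lt (j.2.trans_le hnp)] at hij

theorem Finset.card_filter_sub_ne_zero_le {ι G : Type*} [Fintype ι] [AddGroup G] [DecidableEq G]
    (x y : ι → G) :
    #{j | x j - y j ≠ 0} ≤ #{j | x j ≠ 0} + #{j | y j ≠ 0} := by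
  classical
  refine (card_le_card fun j hj => ?_).trans (card_union_le _ _)
  simp only [mem_union, mem_filter, mem_univ, true_and] at hj ⊢
  by_contra! h
  simp [h.1, h.2] at hj

namespace Matrix

variable {R ι : Type*} [CommRing R] [IsDomain R] [Fintype ι] {a z : ι → R}

theorem eq_zero_of_forall_lt_card_sum_mul_pow_eq_zero (ha : Injective a)
    (h : ∀ i < Fintype.card ι, ∑ j, z j * a j ^ i = 0) : z = 0 := by
  let e := (Fintype.equivFin ι).symm
  have hze : z ∘ e = 0 := eq_zero_of_forall_pow_sum_mul_pow_eq_zero (ha.comp e.injective)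
    fun i => (e.sum_comp fun j => z j * a j ^ (i : ℕ)).trans (h i i.2)
  funext j
  simpa using congrFun hze (e.symm j)

theorem eq_zero_of_mulVec_eq_zero_of_card_support_le [DecidableEq R] {m : ℕ} (ha : Injective a)
    (hz : #{j | z j ≠ 0} ≤ m) (h : (of fun (i : Fin m) j => a j ^ (i : ℕ)) *ᵥ z = 0) :
    z = 0 := by
  set S : Finset ι := {j | z j ≠ 0}
  have hsum (i : ℕ) (hi : i < m) : ∑ j, z j * a j ^ i = 0 := by
    simpa [mulVec, dotProduct, mul_comm] using congrFun h ⟨i, hi⟩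
  have hzS : (fun j : S => z j) = 0 := by
    refine eq_zero_of_forall_lt_card_sum_mul_pow_eq_zero (ha.comp Subtype.val_injective)
      fun i hi => ?_
    rw [Fintype.card_coe] at hi
    exact (sum_coe_sort S fun j => z j * a j ^ i).trans <|
      (sum_filter_of_ne fun j _ hj => left_ne_zero_of_mul hj).trans (hsum i (hi.trans_le hz))
  funext j
  by_contra hj
  exact hj (congrFun hzS ⟨j, by simpa [S] using hj⟩)

end Matrix

theorem vandermonde_sparse_recovery_general (n k p : ℕ)
    (hp : p.Prime) (hpn : n ≤ p)
    (x y : Fin n → ZMod p)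
    (hx : (Finset.univ.filter fun j : Fin n => x j ≠ 0).card ≤ k)
    (hy : (Finset.univ.filter fun j : Fin n => y j ≠ 0).card ≤ k)
    (h : (Matrix.of fun (i : Fin (2 * k)) (j : Fin n) =>
            (((j : ℕ) + 1 : ZMod p)) ^ (i : ℕ)).mulVec x
       = (Matrix.of fun (i : Fin (2 * k)) (j : Fin n) =>
            (((j : ℕ) + 1 : ZMod p)) ^ (i : ℕ)).mulVec y) :
    x = y := by
  have : Fact p.Prime := ⟨hp⟩
  have hnodes : Injective fun j : Fin n => ((j : ℕ) + 1 : ZMod p) :=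
    (add_left_injective 1).comp (ZMod.natCast_fin_injective hpn)
  have hsparse : #{j | (x - y) j ≠ 0} ≤ 2 * k :=
    (card_filter_sub_ne_zero_le x y).trans (by omega)
  rw [← sub_eq_zero, ← Matrix.mulVec_sub] at h
  exact sub_eq_zero.mp (Matrix.eq_zero_of_mulVec_eq_zero_of_card_support_le hnodes hsparse h)

/-- Sparse recovery via the Vandermonde matrix: if `p ≥ n` is prime and
`Φ : 𝔽_p^{2k × n}` has entries `Φ_{i,j} = j^{i-1}` (columns indexed by
`j ∈ {1,…,n}`), then any two `k`-sparse vectors with the same image under `Φ`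
are equal. -/
theorem vandermonde_sparse_recovery (n k p : ℕ) (hn : 1 ≤ n) (hk : 1 ≤ k)
    (hp : p.Prime) (hpn : n ≤ p)
    (x y : Fin n → ZMod p)
    (hx : (Finset.univ.filter fun j : Fin n => x j ≠ 0).card ≤ k)
    (hy : (Finset.univ.filter fun j : Fin n => y j ≠ 0).card ≤ k)
    (h : (Matrix.of fun (i : Fin (2 * k)) (j : Fin n) =>
            (((j : ℕ) + 1 : ZMod p)) ^ (i : ℕ)).mulVec x
       = (Matrix.of fun (i : Fin (2 * k)) (j : Fin n) =>
            (((j : ℕ) + 1 : ZMod p)) ^ (i : ℕ)).mulVec y) :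
    x = y :=
  vandermonde_sparse_recovery_general n k p hp hpn x y hx hy h
end

section
/- Let H = (L, R, E) be a bipartite graph with |L| = m, m ≤ |R| ≤ 2m, such that (a) every vertex of L has degree at least (2/3)·m, and (b) for every A ⊆ L with |A| ≥ m/2 one has Σ_{v∈A} deg(v) ≥ |A|·m − m/4. Then H has an L-perfect matching. -/
/-!
Hall's condition `|A| ≤ |N(A)|` is checked in two regimes. If `|A| ≤ 2m/3`, a single vertex
of `A` already has `2m/3` neighbours. If `|A| > 2m/3`, then `|A|·|N(A)|` bounds the degree sum
of `A` from above, so `|A|·(m - |N(A)|) ≤ m/4 < |A|`, which forces `|N(A)| ≥ m ≥ |A|`.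
-/

open Finset

theorem Nat.le_of_mul_sub_le_mul {a m n : ℕ} (ha : (m : ℝ) / 4 < a)
    (h : (a : ℝ) * m - m / 4 ≤ a * n) : m ≤ n := by
  by_contra! hnm
  have : (a : ℝ) * (n + 1) ≤ a * m :=
    mul_le_mul_of_nonneg_left (by exact_mod_cast hnm) a.cast_nonneg
  linarith

theorem Finset.sum_card_le_card_mul_card_biUnion {ι α : Type*} [DecidableEq α]
    (s : Finset ι) (t : ι → Finset α) :
    ∑ i ∈ s, #(t i) ≤ #s * #(s.biUnion t) :=
  sum_le_card_nsmul s _ _ fun _ hi => card_le_card (subset_biUnion_of_mem t hi)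

theorem Finset.card_le_card_biUnion_of_degree_bounds {ι α : Type*} [DecidableEq α]
    (s : Finset ι) (t : ι → Finset α) (m : ℕ) (hs : #s ≤ m)
    (hdeg : ∀ i ∈ s, (2 : ℝ) / 3 * m ≤ #(t i))
    (hsum : (m : ℝ) / 2 ≤ #s → (#s : ℝ) * m - m / 4 ≤ ∑ i ∈ s, (#(t i) : ℝ)) :
    #s ≤ #(s.biUnion t) := by
  rcases s.eq_empty_or_nonempty with rfl | ⟨i, hi⟩
  · simp
  by_cases hsmall : (#s : ℝ) ≤ 2 / 3 * m
  · have hi_le : (#(t i) : ℝ) ≤ #(s.biUnion t) := by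
      exact_mod_cast card_le_card (subset_biUnion_of_mem t hi)
    exact_mod_cast hsmall.trans ((hdeg i hi).trans hi_le)
  · have hm_nonneg : (0 : ℝ) ≤ m := m.cast_nonneg
    rw [not_le] at hsmall
    have hsum_le : (∑ i ∈ s, (#(t i) : ℝ)) ≤ #s * #(s.biUnion t) := by
      exact_mod_cast sum_card_le_card_mul_card_biUnion s t
    have hm_le : m ≤ #(s.biUnion t) :=
      Nat.le_of_mul_sub_le_mul (by linarith)
        ((hsum (by linarith)).trans hsum_le)
    exact hs.trans hm_le

theorem matching_from_degree_conditions_general {L R : Type*} [Fintype L] [Fintype R]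
    (E : L → R → Prop) [∀ l, DecidablePred (E l)]
    (m : ℕ) (hm : Fintype.card L = m)
    (hdeg : ∀ l : L,
      (2 : ℝ) / 3 * m ≤ ((Finset.univ.filter (E l)).card : ℝ))
    (hsum : ∀ A : Finset L, (m : ℝ) / 2 ≤ (A.card : ℝ) →
      (A.card : ℝ) * m - m / 4 ≤
        ∑ l ∈ A, ((Finset.univ.filter (E l)).card : ℝ)) :
    ∃ f : L → R, Function.Injective f ∧ ∀ l, E l (f l) := by
  classical
  simpa using (all_card_le_biUnion_card_iff_exists_injective
    fun l => univ.filter (E l)).mp fun A =>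
      A.card_le_card_biUnion_of_degree_bounds _ m (hm ▸ card_le_univ A)
        (fun l _ => hdeg l) (hsum A)

/-- Deterministic core of the random-graph matching lemma: a bipartite graph
`H = (L, R, E)` with `|L| = m ≤ |R| ≤ 2m`, minimum `L`-degree at least
`(2/3)·m`, and degree-sum at least `|A|·m − m/4` over every `A ⊆ L` with
`|A| ≥ m/2`, has an `L`-perfect matching. -/
theorem matching_from_degree_conditions {L R : Type*} [Fintype L] [Fintype R]
    (E : L → R → Prop) [∀ l, DecidablePred (E l)]
    (m : ℕ) (hm : Fintype.card L = m)
    (hLR : m ≤ Fintype.card R) (hRL : Fintype.card R ≤ 2 * m)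
    (hdeg : ∀ l : L,
      (2 : ℝ) / 3 * m ≤ ((Finset.univ.filter (E l)).card : ℝ))
    (hsum : ∀ A : Finset L, (m : ℝ) / 2 ≤ (A.card : ℝ) →
      (A.card : ℝ) * m - m / 4 ≤
        ∑ l ∈ A, ((Finset.univ.filter (E l)).card : ℝ)) :
    ∃ f : L → R, Function.Injective f ∧ ∀ l, E l (f l) :=
  matching_from_degree_conditions_general E m hm hdeg hsum
end

section
/- Let G be a graph on vertex set U ∪ V where U = {u_1,...,u_n}, V = {v_1,...,v_n}, constructed from a bit string x indexed by pairs 1 ≤ i < j ≤ n as follows: if x_{i,j} = 0 add edges {u_i,u_j} and {v_i,v_j}; if x_{i,j} = 1 add edges {u_i,v_j} and {v_i,u_j}. Then G is (n−1)-regular; moreover if x is the all-zeros string then G is the disjoint union of two n-cliques and hence not (n−1)-colorable, while if x has exactly one coordinate equal to 1 then G is connected, is neither a clique nor an odd cycle (for n ≥ 4), and is (n−1)-colorable. -/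
/-- The adjacency relation of the query-lower-bound gadget graph on
`U ∪ V = Fin n ⊕ Fin n`: for `i ≠ j`, if `x i j = false` the internal edges
`{u_i,u_j}` and `{v_i,v_j}` are present; if `x i j = true` the crossing edges
`{u_i,v_j}` and `{v_i,u_j}` are present. -/
def gadgetAdj (n : ℕ) (x : Fin n → Fin n → Bool) :
    Fin n ⊕ Fin n → Fin n ⊕ Fin n → Prop
  | Sum.inl i, Sum.inl j => i ≠ j ∧ x i j = false
  | Sum.inr i, Sum.inr j => i ≠ j ∧ x i j = false
  | Sum.inl i, Sum.inr j => i ≠ j ∧ x i j = true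
  | Sum.inr i, Sum.inl j => i ≠ j ∧ x i j = true

/-- The gadget graph built from a symmetric bit string `x`. -/
def gadget (n : ℕ) (x : Fin n → Fin n → Bool) (hx : ∀ i j, x i j = x j i) :
    SimpleGraph (Fin n ⊕ Fin n) where
  Adj := gadgetAdj n x
  symm := by
    constructor
    rintro (i | i) (j | j) ⟨h1, h2⟩ <;> exact ⟨h1.symm, (hx j i).trans h2⟩
  loopless := by
    constructor
    rintro (i | i) ⟨h1, _⟩ <;> exact h1 rfl

/-!
Every vertex is adjacent to exactly one of `u_j`, `v_j` for each index `j` other than its own,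
so `G` is `(n-1)`-regular. For `x = 0` the `u_i` form an `n`-clique. If `x` is `1` only at
`{i, j}`, colour `u_a` by `a` with `j` merged into `i`, and `v_a` by the same colour followed by
a transposition moving the merged colour; a column `k` of zeros makes `G` connected, and `G` has
an even number of vertices, so it is not an odd cycle.
-/

def collapse {β : Type*} [DecidableEq β] {i j : β} (hij : i ≠ j) (a : β) : {b // b ≠ j} :=
  if h : a = j then ⟨i, hij⟩ else ⟨a, h⟩

lemma collapse_eq_collapse_iff {β : Type*} [DecidableEq β] {i j a b : β} (hij : i ≠ j)
    (hab : a ≠ b) : collapse hij a = collapse hij b ↔ a = i ∧ b = j ∨ a = j ∧ b = i := by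
  unfold collapse
  split_ifs with ha hb hb <;> simp only [Subtype.mk.injEq] <;> grind

namespace Gadget

open SimpleGraph

variable {n : ℕ} {x : Fin n → Fin n → Bool} {hx : ∀ i j, x i j = x j i}

@[simp] lemma adj_inl_inl {a b : Fin n} :
    (gadget n x hx).Adj (.inl a) (.inl b) ↔ a ≠ b ∧ x a b = false := Iff.rfl

@[simp] lemma adj_inr_inr {a b : Fin n} :
    (gadget n x hx).Adj (.inr a) (.inr b) ↔ a ≠ b ∧ x a b = false := Iff.rfl

@[simp] lemma adj_inl_inr {a b : Fin n} :
    (gadget n x hx).Adj (.inl a) (.inr b) ↔ a ≠ b ∧ x a b = true := Iff.rfl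

@[simp] lemma adj_inr_inl {a b : Fin n} :
    (gadget n x hx).Adj (.inr a) (.inl b) ↔ a ≠ b ∧ x a b = true := Iff.rfl

lemma injOn_elim_neighborSet (w : Fin n ⊕ Fin n) :
    Set.InjOn (Sum.elim id id) ((gadget n x hx).neighborSet w) := by
  rcases w with i | i <;> rintro (a | a) ha (b | b) hb (hab : a = b) <;> subst hab <;>
    simp_all [mem_neighborSet]

lemma image_elim_neighborSet (w : Fin n ⊕ Fin n) :
    Sum.elim id id '' (gadget n x hx).neighborSet w = {j | j ≠ Sum.elim id id w} := by
  ext j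
  constructor
  · rcases w with i | i <;> rintro ⟨a | a, ha, rfl⟩ <;> exact (Ne.symm ha.1)
  · intro hj
    rcases w with i | i <;> cases h : x i j
    exacts [⟨.inl j, ⟨Ne.symm hj, h⟩, rfl⟩, ⟨.inr j, ⟨Ne.symm hj, h⟩, rfl⟩,
      ⟨.inr j, ⟨Ne.symm hj, h⟩, rfl⟩, ⟨.inl j, ⟨Ne.symm hj, h⟩, rfl⟩]

lemma ncard_neighborSet (w : Fin n ⊕ Fin n) :
    ((gadget n x hx).neighborSet w).ncard = n - 1 := by
  rw [← (injOn_elim_neighborSet w).ncard_image, image_elim_neighborSet,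
    ← Nat.card_coe_set_eq, Nat.card_eq_fintype_card, Set.card_ne_eq, Fintype.card_fin]

lemma not_colorable_of_forall_eq_false (h : ∀ i j, x i j = false) (hn : 0 < n) :
    ¬(gadget n x hx).Colorable (n - 1) := fun hc => by
  have := hc.card_le_of_pairwise_adj Sum.inl fun a b hab => adj_inl_inl.mpr ⟨hab, h a b⟩
  rw [Nat.card_fin] at this
  omega

lemma ne_top (i : Fin n) : gadget n x hx ≠ ⊤ := fun h => by
  have : (gadget n x hx).Adj (.inl i) (.inr i) := h ▸ Sum.inl_ne_inr
  exact this.1 rfl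

/-- A column `k` of zeros joins every vertex to `u_k` or `v_k`, and one crossing edge joins
the two sides. -/
lemma connected_of_eq_true_of_forall_eq_false {i j k : Fin n} (hij : i ≠ j) (hxij : x i j = true)
    (hk : ∀ a, x a k = false) : (gadget n x hx).Connected := by
  have reach_inl (a : Fin n) : (gadget n x hx).Reachable (.inl k) (.inl a) := by
    obtain rfl | hak := eq_or_ne a k
    · rfl
    · exact Adj.reachable ⟨Ne.symm hak, (hx k a).trans (hk a)⟩
  have reach_inr (a : Fin n) : (gadget n x hx).Reachable (.inr k) (.inr a) := by
    obtain rfl | hak := eq_or_ne a k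
    · rfl
    · exact Adj.reachable ⟨Ne.symm hak, (hx k a).trans (hk a)⟩
  have cross : (gadget n x hx).Reachable (.inl i) (.inr j) := Adj.reachable ⟨hij, hxij⟩
  rw [connected_iff_exists_forall_reachable]
  refine ⟨.inl k, ?_⟩
  rintro (a | a)
  · exact reach_inl a
  · exact ((reach_inl i).trans cross).trans ((reach_inr j).symm.trans (reach_inr a))

def coloring {α : Type*} (c : Fin n → α) (hc : ∀ a b, a ≠ b → (c a = c b ↔ x a b = true))
    (σ : Equiv.Perm α) (hσ : ∀ a b, x a b = true → σ (c a) ≠ c a) :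
    (gadget n x hx).Coloring α :=
  Coloring.mk (Sum.elim c (σ ∘ c)) <| by
    rintro (a | a) (b | b) ⟨hab, h⟩ <;> simp only [Sum.elim_inl, Sum.elim_inr, Function.comp]
    · exact fun hcab => by simp [(hc a b hab).mp hcab] at h
    · rw [(hc a b hab).mpr h]
      exact (hσ b a ((hx b a).trans h)).symm
    · rw [← (hc a b hab).mpr h]
      exact hσ a b h
    · exact fun hcab => by simp [(hc a b hab).mp (σ.injective hcab)] at h

lemma colorable_of_eq_true_iff {i j k : Fin n} (hij : i ≠ j) (hki : k ≠ i) (hkj : k ≠ j)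
    (hxij : ∀ a b, x a b = true ↔ a = i ∧ b = j ∨ a = j ∧ b = i) :
    (gadget n x hx).Colorable (n - 1) := by
  have hσ (a b : Fin n) (hab : x a b = true) :
      Equiv.swap ⟨i, hij⟩ ⟨k, hkj⟩ (collapse hij a) ≠ collapse hij a := by
    obtain ⟨rfl, -⟩ | ⟨rfl, -⟩ := (hxij a b).mp hab <;>
      simp [collapse, hij, hki]
  have C := coloring (hx := hx) (collapse hij)
    (fun a b hab => (collapse_eq_collapse_iff hij hab).trans (hxij a b).symm) _ hσ
  simpa [Fintype.card_subtype_compl] using C.colorable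

end Gadget

/-- The gadget graph is `(n−1)`-regular. Moreover, if `x` is all-zeros then
it is not `(n−1)`-colorable (it is two disjoint `n`-cliques), while if `x`
has exactly one coordinate equal to `1` then it is connected, neither a
clique nor an odd cycle, and `(n−1)`-colorable. -/
theorem gadget_properties (n : ℕ) (hn : 4 ≤ n)
    (x : Fin n → Fin n → Bool) (hx : ∀ i j, x i j = x j i) :
    (∀ w : Fin n ⊕ Fin n, ((gadget n x hx).neighborSet w).ncard = n - 1)
    ∧ ((∀ i j, x i j = false) → ¬(gadget n x hx).Colorable (n - 1))
    ∧ (∀ i j : Fin n, i ≠ j → x i j = true →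
        (∀ a b, x a b = true → (a = i ∧ b = j) ∨ (a = j ∧ b = i)) →
        (gadget n x hx).Connected
        ∧ gadget n x hx ≠ ⊤
        ∧ ¬((gadget n x hx).Connected
            ∧ (∀ w, ((gadget n x hx).neighborSet w).ncard = 2)
            ∧ Odd (Fintype.card (Fin n ⊕ Fin n)))
        ∧ (gadget n x hx).Colorable (n - 1)) := by
  refine ⟨Gadget.ncard_neighborSet, fun h => Gadget.not_colorable_of_forall_eq_false h (by omega),
    fun i j hij hxij hone => ?_⟩
  have hx_iff (a b : Fin n) : x a b = true ↔ a = i ∧ b = j ∨ a = j ∧ b = i :=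
    ⟨hone a b, by rintro (⟨rfl, rfl⟩ | ⟨rfl, rfl⟩); exacts [hxij, (hx _ _).trans hxij]⟩
  have three_le : 3 ≤ ENat.card (Fin n) := by
    rw [ENat.card_eq_coe_fintype_card, Fintype.card_fin]
    exact_mod_cast (by omega : 3 ≤ n)
  obtain ⟨k, hki, hkj⟩ := ENat.exists_ne_ne_of_three_le three_le i j
  have hk (a : Fin n) : x a k = false := by
    simp [Bool.eq_false_iff, hx_iff, hki, hkj]
  exact ⟨Gadget.connected_of_eq_true_of_forall_eq_false hij hxij hk, Gadget.ne_top i,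
    fun ⟨_, _, hodd⟩ => Nat.not_odd_iff_even.mpr ⟨n, rfl⟩ (by simpa [Fintype.card_sum] using hodd),
    Gadget.colorable_of_eq_true_iff hij hki hkj hx_iff⟩
end
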